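/- Let (K^{(m)})_{m≥0} be an inhomogeneous Markov chain on ℕ with K^{(0)} finite and transitions p(K^{(m+1)} = k | K^{(m)}) = Poisson(k; α^{(m)} Σ_{k'=1}^{K^{(m)}} β^{(m)}/(k'+β^{(m)}−1)). If there exist finite ᾱ, β̄ such that α^{(m)} < ᾱ and β^{(m)} < β̄ for all m, then lim_{m→∞} P(K^{(m)} = 0) = 1. -/

import Mathlib

open Finset MeasureTheory Filter

/-- The CIBP mean function `λ(K) = α ∑_{k=1}^K β/(k+β-1)`. -/
noncomputable def cibpLam (α β : ℝ) (K : ℕ) : ℝ :=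
  α * ∑ k ∈ Finset.range K, β / ((k : ℝ) + 1 + β - 1)

/-- The Poisson probability mass `Poisson(k; r) = exp(-r) r^k / k!`. -/
noncomputable def poisProb (r : ℝ) (k : ℕ) : ℝ :=
  Real.exp (-r) * r ^ k / (Nat.factorial k)

open scoped ENNReal Topology

/-!
Since `λ(0) = 0`, the state `0` is absorbing, and two bounds on the rates, uniform in the depth,
drive the argument. First, `λ(n) ≤ C + n / 2`: the Poisson step then maps a first moment `E` to at
most `C + E / 2`, so for a bounded initial state the first moment stays bounded and the mass above
level `N` is `O(1 / N)` uniformly in time. Second, `λ(n) ≤ ᾱ n`: from any state `n ≤ N` the chain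
jumps to `0` with probability at least `exp (-ᾱ N)`, so `P(K = 0)`, which is bounded by `1`, gains
`exp (-ᾱ N) P(1 ≤ K ≤ N)` at every step, and `P(1 ≤ K ≤ N)` is summable in time. Together these
give `P(K ≠ 0) → 0` when `K⁽⁰⁾` is bounded; a truncation of `K⁽⁰⁾` removes that restriction.
-/

lemma poisProb_nonneg {r : ℝ} (hr : 0 ≤ r) (k : ℕ) : 0 ≤ poisProb r k := by
  unfold poisProb; positivity

lemma poisProb_zero (r : ℝ) : poisProb r 0 = Real.exp (-r) := by
  simp [poisProb]

lemma hasSum_poisProb (r : ℝ) : HasSum (poisProb r) 1 := by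
  have h := (NormedSpace.expSeries_div_hasSum_exp r).mul_left (Real.exp (-r))
  rw [← Real.exp_eq_exp_ℝ, ← Real.exp_add, neg_add_cancel, Real.exp_zero] at h
  have e : poisProb r = fun k => Real.exp (-r) * (r ^ k / k.factorial) :=
    funext fun k => by rw [poisProb, mul_div_assoc]
  exact e ▸ h

lemma succ_mul_poisProb_succ (r : ℝ) (k : ℕ) :
    ((k : ℝ) + 1) * poisProb r (k + 1) = r * poisProb r k := by
  simp only [poisProb, Nat.factorial_succ, pow_succ]
  push_cast
  field_simp

lemma hasSum_natCast_mul_poisProb (r : ℝ) : HasSum (fun k : ℕ => (k : ℝ) * poisProb r k) r := by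
  rw [← hasSum_nat_add_iff' 1]
  simpa [succ_mul_poisProb_succ] using (hasSum_poisProb r).mul_left r

lemma tsum_ofReal_poisProb {r : ℝ} (hr : 0 ≤ r) : ∑' k, ENNReal.ofReal (poisProb r k) = 1 := by
  rw [← ENNReal.ofReal_tsum_of_nonneg (poisProb_nonneg hr) (hasSum_poisProb r).summable,
    (hasSum_poisProb r).tsum_eq, ENNReal.ofReal_one]

lemma tsum_natCast_mul_ofReal_poisProb {r : ℝ} (hr : 0 ≤ r) :
    ∑' k : ℕ, (k : ℝ≥0∞) * ENNReal.ofReal (poisProb r k) = ENNReal.ofReal r := by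
  have hnonneg (k : ℕ) : 0 ≤ (k : ℝ) * poisProb r k :=
    mul_nonneg k.cast_nonneg (poisProb_nonneg hr k)
  simp_rw [← ENNReal.ofReal_natCast, ← ENNReal.ofReal_mul (Nat.cast_nonneg _)]
  rw [← ENNReal.ofReal_tsum_of_nonneg hnonneg (hasSum_natCast_mul_poisProb r).summable,
    (hasSum_natCast_mul_poisProb r).tsum_eq]

lemma le_add_two_mul_of_le_add_half {e : ℕ → ℝ≥0∞} {A : ℝ≥0∞} (h : ∀ m, e (m + 1) ≤ A + e m / 2)
    (m : ℕ) : e m ≤ e 0 + 2 * A := by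
  induction m with
  | zero => exact le_self_add
  | succ m ih =>
    calc e (m + 1) ≤ A + (e 0 + 2 * A) / 2 := (h m).trans (by gcongr)
      _ = e 0 / 2 + 2 * A := by
        rw [ENNReal.add_div, two_mul, ENNReal.add_div, ENNReal.add_halves]; ring
      _ ≤ e 0 + 2 * A := by gcongr; exact ENNReal.half_le_self

lemma tendsto_atTop_zero_of_add_mul_le_succ {u v : ℕ → ℝ≥0∞} {B c : ℝ≥0∞} (hc : c ≠ 0)
    (hB : B ≠ ∞) (hu : ∀ m, u m ≤ B) (h : ∀ m, u m + c * v m ≤ u (m + 1)) :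
    Tendsto v atTop (𝓝 0) := by
  have hpartial : ∀ M, c * ∑ m ∈ range M, v m ≤ B := by
    have hgrow : ∀ M, u 0 + c * ∑ m ∈ range M, v m ≤ u M := by
      intro M
      induction M with
      | zero => simp
      | succ M ih =>
        rw [sum_range_succ, mul_add, ← add_assoc]
        exact (add_le_add_left ih _).trans (h M)
    exact fun M => le_add_self.trans ((hgrow M).trans (hu M))
  have hsum : ∑' m, v m ≤ B / c := by
    refine ENNReal.tsum_le_of_sum_range_le fun M => ?_
    rw [ENNReal.le_div_iff_mul_le (Or.inl hc) (Or.inr hB), mul_comm]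
    exact hpartial M
  exact ENNReal.tendsto_atTop_zero_of_tsum_ne_top
    (ne_top_of_le_ne_top (ENNReal.div_ne_top hB hc) hsum)

lemma tendsto_zero_of_le_add {α : Type*} {l : Filter α} {x : α → ℝ≥0∞} {y : ℕ → α → ℝ≥0∞}
    {c : ℕ → ℝ≥0∞} (hy : ∀ N, Tendsto (y N) l (𝓝 0)) (hc : Tendsto c atTop (𝓝 0))
    (h : ∀ N a, x a ≤ y N a + c N) : Tendsto x l (𝓝 0) := by
  simp only [ENNReal.tendsto_nhds_zero] at hy hc ⊢
  intro ε hε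
  have hε2 : 0 < ε / 2 := ENNReal.half_pos hε.ne'
  obtain ⟨N, hN⟩ := (hc _ hε2).exists
  filter_upwards [hy N _ hε2] with a ha
  calc x a ≤ y N a + c N := h N a
    _ ≤ ε / 2 + ε / 2 := add_le_add ha hN
    _ = ε := ENNReal.add_halves ε

lemma tsum_succ_le_sum_add_div (p : ℕ → ℝ≥0∞) (N : ℕ) :
    ∑' n, p (n + 1) ≤ ∑ n ∈ range N, p (n + 1) + (∑' n : ℕ, (n : ℝ≥0∞) * p n) / (N + 1) := by
  rw [← ENNReal.summable.sum_add_tsum_nat_add' (f := fun n => p (n + 1)) (k := N)]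
  gcongr
  rw [ENNReal.le_div_iff_mul_le (by simp) (by simp), mul_comm, ← ENNReal.tsum_mul_left]
  calc ∑' n, ((N : ℝ≥0∞) + 1) * p (n + N + 1)
      ≤ ∑' n, ((n + N + 1 : ℕ) : ℝ≥0∞) * p (n + N + 1) := by
        gcongr with n; exact_mod_cast (by omega : N + 1 ≤ n + N + 1)
    _ ≤ ∑' n : ℕ, (n : ℝ≥0∞) * p n :=
        ENNReal.tsum_comp_le_tsum_of_injective (fun i j hij => by simpa using hij)
          (fun n : ℕ => (n : ℝ≥0∞) * p n)

section PoisStep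

/-- The law of the next state when the current state has law `p` and the chain moves from `n` to
a `Poisson(r n)` state. -/
noncomputable def poisStep (r : ℕ → ℝ) (p : ℕ → ℝ≥0∞) (k : ℕ) : ℝ≥0∞ :=
  ∑' n, ENNReal.ofReal (poisProb (r n) k) * p n

variable {r : ℕ → ℝ} {p : ℕ → ℝ≥0∞}

lemma tsum_mul_poisStep (w : ℕ → ℝ≥0∞) :
    ∑' k, w k * poisStep r p k = ∑' n, (∑' k, w k * ENNReal.ofReal (poisProb (r n) k)) * p n := by
  simp only [poisStep, ← ENNReal.tsum_mul_left, ← ENNReal.tsum_mul_right, mul_assoc]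
  exact ENNReal.tsum_comm

lemma tsum_poisStep (hr : ∀ n, 0 ≤ r n) : ∑' k, poisStep r p k = ∑' n, p n := by
  simpa [tsum_ofReal_poisProb (hr _)] using tsum_mul_poisStep (r := r) (p := p) 1

lemma tsum_natCast_mul_poisStep (hr : ∀ n, 0 ≤ r n) :
    ∑' k : ℕ, (k : ℝ≥0∞) * poisStep r p k = ∑' n, ENNReal.ofReal (r n) * p n := by
  simp only [tsum_mul_poisStep, tsum_natCast_mul_ofReal_poisProb (hr _)]

lemma poisStep_zero : poisStep r p 0 = ∑' n, ENNReal.ofReal (Real.exp (-r n)) * p n := by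
  simp only [poisStep, poisProb_zero]

lemma tsum_natCast_mul_poisStep_le {C : ℝ} (hr : ∀ n, 0 ≤ r n) (hsub : ∀ n, r n ≤ C + n / 2) :
    ∑' k : ℕ, (k : ℝ≥0∞) * poisStep r p k ≤
      ENNReal.ofReal C * ∑' n, p n + (∑' n : ℕ, (n : ℝ≥0∞) * p n) / 2 := by
  have hrate n : ENNReal.ofReal (r n) ≤ ENNReal.ofReal C + n / 2 := by
    calc ENNReal.ofReal (r n) ≤ ENNReal.ofReal (C + n / 2) := ENNReal.ofReal_le_ofReal (hsub n)
      _ ≤ ENNReal.ofReal C + ENNReal.ofReal (n / 2) := ENNReal.ofReal_add_le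
      _ = ENNReal.ofReal C + n / 2 := by
        rw [ENNReal.ofReal_div_of_pos two_pos, ENNReal.ofReal_natCast, ENNReal.ofReal_ofNat]
  calc ∑' k : ℕ, (k : ℝ≥0∞) * poisStep r p k = ∑' n, ENNReal.ofReal (r n) * p n :=
        tsum_natCast_mul_poisStep hr
    _ ≤ ∑' n, (ENNReal.ofReal C * p n + (n : ℝ≥0∞) * p n / 2) := by
        gcongr with n
        rw [ENNReal.mul_div_right_comm, ← add_mul]
        exact mul_le_mul_left (hrate n) _
    _ = ENNReal.ofReal C * ∑' n, p n + (∑' n : ℕ, (n : ℝ≥0∞) * p n) / 2 := by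
        simp only [ENNReal.tsum_add, ENNReal.tsum_mul_left, div_eq_mul_inv, ENNReal.tsum_mul_right]

lemma add_mul_sum_le_poisStep_zero {a : ℝ} (ha : 0 ≤ a) (hlin : ∀ n, r n ≤ a * n) (N : ℕ) :
    p 0 + ENNReal.ofReal (Real.exp (-(a * N))) * ∑ n ∈ range N, p (n + 1) ≤ poisStep r p 0 := by
  rw [poisStep_zero, tsum_eq_zero_add' ENNReal.summable]
  apply add_le_add
  · have hr0 : r 0 ≤ 0 := by simpa using hlin 0
    exact le_mul_of_one_le_left' (ENNReal.one_le_ofReal.mpr (Real.one_le_exp (by linarith)))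
  · rw [mul_sum]
    refine (sum_le_sum fun n hn => ?_).trans (ENNReal.sum_le_tsum _)
    have hnN : ((n + 1 : ℕ) : ℝ) ≤ N := by exact_mod_cast mem_range.mp hn
    gcongr
    calc r (n + 1) ≤ a * (n + 1 : ℕ) := hlin (n + 1)
      _ ≤ a * N := mul_le_mul_of_nonneg_left hnN ha

end PoisStep

theorem tendsto_tsum_succ_zero_of_poisStep {r : ℕ → ℕ → ℝ} {p : ℕ → ℕ → ℝ≥0∞} {a C : ℝ}
    (hr : ∀ m n, 0 ≤ r m n) (hlin : ∀ m n, r m n ≤ a * n) (hsub : ∀ m n, r m n ≤ C + n / 2)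
    (hp : ∀ m, p (m + 1) = poisStep (r m) (p m))
    (hmass : ∑' n, p 0 n ≠ ∞) (hmean : ∑' n : ℕ, (n : ℝ≥0∞) * p 0 n ≠ ∞) :
    Tendsto (fun m => ∑' n, p m (n + 1)) atTop (𝓝 0) := by
  have ha : 0 ≤ a := by simpa using (hr 0 1).trans (hlin 0 1)
  have hconst m : ∑' n, p m n = ∑' n, p 0 n := by
    induction m with
    | zero => rfl
    | succ m ih => rw [hp, tsum_poisStep (hr m), ih]
  set Z := ∑' n : ℕ, (n : ℝ≥0∞) * p 0 n + 2 * (ENNReal.ofReal C * ∑' n, p 0 n)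
  have hmoment m : ∑' n : ℕ, (n : ℝ≥0∞) * p m n ≤ Z :=
    le_add_two_mul_of_le_add_half (e := fun m => ∑' n : ℕ, (n : ℝ≥0∞) * p m n)
      (fun m => by
        simpa only [hp, hconst] using tsum_natCast_mul_poisStep_le (p := p m) (hr m) (hsub m)) m
  have hbulk N : Tendsto (fun m => ∑ n ∈ range N, p m (n + 1)) atTop (𝓝 0) :=
    tendsto_atTop_zero_of_add_mul_le_succ (by simp [Real.exp_pos]) hmass
      (fun m => (ENNReal.le_tsum 0).trans (hconst m).le)
      (fun m => hp m ▸ add_mul_sum_le_poisStep_zero ha (hlin m) N)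
  have htail : Tendsto (fun N : ℕ => Z / (N + 1)) atTop (𝓝 0) := by
    have hZ : Z ≠ ∞ := by finiteness
    have hN : Tendsto (fun N : ℕ => (N : ℝ≥0∞) + 1) atTop (𝓝 ∞) := by
      simpa [Function.comp_def] using ENNReal.tendsto_nat_nhds_top.comp (tendsto_add_atTop_nat 1)
    simpa using ENNReal.Tendsto.const_div hN (Or.inr hZ)
  exact tendsto_zero_of_le_add hbulk htail fun N m =>
    (tsum_succ_le_sum_add_div (p m) N).trans (by gcongr; exact hmoment m)

section Measures

variable {Ω : Type*} [MeasurableSpace Ω] (μ : Measure Ω) {X : Ω → ℕ}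

lemma measure_inter_preimage_eq_tsum {β : Type*} [MeasurableSpace β] [Countable β]
    [MeasurableSingletonClass β] {f : Ω → β} (hf : Measurable f) (A : Set Ω)
    (s : Set β) : μ (A ∩ f ⁻¹' s) = ∑' b : s, μ (A ∩ f ⁻¹' {b.1}) := by
  rw [Set.inter_comm, ← Measure.restrict_apply (hf s.to_countable.measurableSet),
    ← tsum_measure_preimage_singleton s.to_countable fun b _ => hf (measurableSet_singleton b)]
  simp only [Measure.restrict_apply (hf (measurableSet_singleton _)), Set.inter_comm]

lemma measure_ne_zero_eq_tsum (hX : Measurable X) :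
    μ {ω | X ω ≠ 0} = ∑' n, μ {ω | X ω = n + 1} := by
  have hset : {ω | X ω ≠ 0} = Set.univ ∩ X ⁻¹' Set.range Nat.succ := by
    ext ω; simp [Nat.range_succ, Nat.pos_iff_ne_zero]
  rw [hset, measure_inter_preimage_eq_tsum μ hX,
    tsum_range (fun n => μ (Set.univ ∩ X ⁻¹' {n})) Nat.succ_injective]
  simp [Set.preimage, Set.univ_inter]

lemma tendsto_measure_lt_atTop_zero [IsFiniteMeasure μ] (hX : Measurable X) :
    Tendsto (fun T : ℕ => μ {ω | T < X ω}) atTop (𝓝 0) := by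
  have hanti : Antitone fun T : ℕ => {ω | T < X ω} :=
    fun T T' hT ω hω => lt_of_le_of_lt hT hω
  have hempty : ⋂ T : ℕ, {ω | T < X ω} = ∅ :=
    Set.eq_empty_of_forall_notMem fun ω hω => lt_irrefl (X ω) (Set.mem_iInter.mp hω (X ω))
  have h := tendsto_measure_iInter_atTop (μ := μ) (s := fun T : ℕ => {ω | T < X ω})
    (fun T => (hX measurableSet_Ioi).nullMeasurableSet) hanti ⟨0, measure_ne_top μ _⟩
  rwa [hempty, measure_empty] at h

end Measures

section MarkovChain

variable {Ω : Type*} [MeasurableSpace Ω]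

def HasMarkovTransitions (μ : Measure Ω) (K : ℕ → Ω → ℕ) (P : ℕ → ℕ → ℕ → ℝ≥0∞) : Prop :=
  ∀ m k (hist : ℕ → ℕ), μ {ω | K (m + 1) ω = k ∧ ∀ i ≤ m, K i ω = hist i} =
    P m (hist m) k * μ {ω | ∀ i ≤ m, K i ω = hist i}

variable {μ : Measure Ω} {K : ℕ → Ω → ℕ} {P : ℕ → ℕ → ℕ → ℝ≥0∞}

lemma HasMarkovTransitions.restrict_initial (h : HasMarkovTransitions μ K P)
    (hK0 : Measurable (K 0)) (s : Set ℕ) : HasMarkovTransitions (μ.restrict (K 0 ⁻¹' s)) K P := by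
  intro m k hist
  simp only [Measure.restrict_apply' (hK0 (MeasurableSet.of_discrete (s := s)))]
  set path := {ω | ∀ i ≤ m, K i ω = hist i}
  have hstep : {ω | K (m + 1) ω = k ∧ ∀ i ≤ m, K i ω = hist i} ⊆ path := fun ω hω => hω.2
  by_cases h0 : hist 0 ∈ s
  · have hpath : path ⊆ K 0 ⁻¹' s := fun ω hω => by
      rw [Set.mem_preimage, hω 0 m.zero_le]; exact h0
    rw [Set.inter_eq_left.mpr hpath, Set.inter_eq_left.mpr (hstep.trans hpath)]
    exact h m k hist
  · have hempty : ∀ t ⊆ path, t ∩ K 0 ⁻¹' s = ∅ := fun t ht =>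
      Set.eq_empty_of_forall_notMem fun ω hω => h0 (ht hω.1 0 m.zero_le ▸ hω.2)
    rw [hempty _ hstep, hempty _ subset_rfl, measure_empty, mul_zero]

open Fin.NatCast in
lemma HasMarkovTransitions.measure_succ_eq_tsum (h : HasMarkovTransitions μ K P)
    (hK : ∀ m, Measurable (K m)) (m k : ℕ) :
    μ {ω | K (m + 1) ω = k} = ∑' n, P m n k * μ {ω | K m ω = n} := by
  set A := {ω | K (m + 1) ω = k}
  let H : Ω → Fin (m + 1) → ℕ := fun ω i => K i ω
  have hH : Measurable H := measurable_pi_lambda _ fun i => hK i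
  have hfiber (v : Fin (m + 1) → ℕ) :
      μ (A ∩ H ⁻¹' {v}) = P m (v (Fin.last m)) k * μ (H ⁻¹' {v}) := by
    have hpath : H ⁻¹' {v} = {ω | ∀ i ≤ m, K i ω = v (i : Fin (m + 1))} := by
      ext ω
      simp only [Set.mem_preimage, Set.mem_singleton_iff, funext_iff, H]
      refine ⟨fun hω i hi => ?_, fun hω j => ?_⟩
      · simpa [Nat.mod_eq_of_lt (Nat.lt_succ_of_le hi)] using hω (i : Fin (m + 1))
      · simpa using hω j (Nat.lt_succ_iff.mp j.2)
    rw [hpath, ← Fin.natCast_eq_last]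
    exact h m k fun i => v (i : Fin (m + 1))
  have hlevel (n : ℕ) : μ (A ∩ {ω | K m ω = n}) = P m n k * μ {ω | K m ω = n} := by
    have hS : {ω | K m ω = n} = H ⁻¹' {v | v (Fin.last m) = n} := rfl
    rw [hS, measure_inter_preimage_eq_tsum μ hH, ← Set.univ_inter (H ⁻¹' _),
      measure_inter_preimage_eq_tsum μ hH, ← ENNReal.tsum_mul_left]
    refine tsum_congr fun v => ?_
    rw [hfiber, Set.univ_inter, v.2]
  calc μ A = μ (A ∩ K m ⁻¹' Set.univ) := by rw [Set.preimage_univ, Set.inter_univ]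
    _ = ∑' n, μ (A ∩ {ω | K m ω = n}) := by
        rw [measure_inter_preimage_eq_tsum μ (hK m)]
        exact tsum_univ (f := fun n => μ (A ∩ K m ⁻¹' {n}))
    _ = ∑' n, P m n k * μ {ω | K m ω = n} := tsum_congr hlevel

end MarkovChain

section PoissonChain

variable {Ω : Type*} [MeasurableSpace Ω] {μ : Measure Ω} {K : ℕ → Ω → ℕ} {r : ℕ → ℕ → ℝ}
  {a C : ℝ}

lemma tendsto_restrict_measure_ne_zero_of_poisson [IsFiniteMeasure μ] (hr : ∀ m n, 0 ≤ r m n)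
    (hlin : ∀ m n, r m n ≤ a * n) (hsub : ∀ m n, r m n ≤ C + n / 2)
    (hK : ∀ m, Measurable (K m))
    (h : HasMarkovTransitions μ K fun m n k => ENNReal.ofReal (poisProb (r m n) k)) (T : ℕ) :
    Tendsto (fun m => μ.restrict (K 0 ⁻¹' Set.Iic T) {ω | K m ω ≠ 0}) atTop (𝓝 0) := by
  set ν := μ.restrict (K 0 ⁻¹' Set.Iic T)
  have hsupp : ∀ n ∉ range (T + 1), ν {ω | K 0 ω = n} = 0 := fun n hn => by
    rw [Measure.restrict_apply' (hK 0 measurableSet_Iic)]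
    refine measure_mono_null (fun ω hω => ?_) measure_empty
    exact hn (mem_range.mpr (Nat.lt_succ_of_le (hω.1 ▸ hω.2 : n ≤ T)))
  simp only [measure_ne_zero_eq_tsum _ (hK _)]
  refine tendsto_tsum_succ_zero_of_poisStep (p := fun m n => ν {ω | K m ω = n}) hr hlin hsub
    (fun m => funext ((h.restrict_initial (hK 0) _).measure_succ_eq_tsum hK m)) ?_ ?_
  · rw [tsum_eq_sum hsupp]
    exact ENNReal.sum_ne_top.mpr fun n _ => measure_ne_top _ _
  · rw [tsum_eq_sum fun n hn => by rw [hsupp n hn, mul_zero]]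
    exact ENNReal.sum_ne_top.mpr fun n _ => ENNReal.mul_ne_top (by simp) (measure_ne_top _ _)

theorem tendsto_measure_eq_zero_of_poisson [IsProbabilityMeasure μ] (hr : ∀ m n, 0 ≤ r m n)
    (hlin : ∀ m n, r m n ≤ a * n) (hsub : ∀ m n, r m n ≤ C + n / 2)
    (hK : ∀ m, Measurable (K m))
    (h : HasMarkovTransitions μ K fun m n k => ENNReal.ofReal (poisProb (r m n) k)) :
    Tendsto (fun m => μ {ω | K m ω = 0}) atTop (𝓝 1) := by
  -- `K 0` need not have a finite mean, hence the truncation to `{K 0 ≤ T}`.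
  have hext : Tendsto (fun m => μ {ω | K m ω ≠ 0}) atTop (𝓝 0) := by
    refine tendsto_zero_of_le_add (tendsto_restrict_measure_ne_zero_of_poisson hr hlin hsub hK h)
      (tendsto_measure_lt_atTop_zero μ (hK 0)) fun T m => ?_
    rw [Measure.restrict_apply' (hK 0 measurableSet_Iic)]
    refine (measure_mono fun ω hω => ?_).trans (measure_union_le _ _)
    exact (le_or_gt (K 0 ω) T).imp (fun h => ⟨hω, h⟩) id
  have hzero m : μ {ω | K m ω = 0} = 1 - μ {ω | K m ω ≠ 0} := by
    have hs : MeasurableSet {ω | K m ω ≠ 0} := (hK m (measurableSet_singleton 0)).compl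
    rw [← prob_compl_eq_one_sub hs]
    congr 1
    ext ω
    simp
  simpa [hzero] using ENNReal.Tendsto.sub tendsto_const_nhds hext (Or.inl ENNReal.one_ne_top)

end PoissonChain

lemma sum_range_le_sq_add_half {t : ℕ → ℝ} {c : ℝ} (ht : ∀ k, t k ≤ c / (k + 1)) (n : ℕ) :
    ∑ k ∈ range n, t k ≤ c ^ 2 + n / 2 := by
  have hterm (k : ℕ) : t k ≤ 1 / 2 + c ^ 2 * (1 / ((k : ℝ) + 1) - 1 / ((k + 1 : ℕ) + 1)) := by
    have hx : (1 : ℝ) ≤ k + 1 := by simp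
    -- AM-GM `2 c x ≤ x ^ 2 + c ^ 2` at `x = k + 1`, together with `x (x + 1) ≤ 2 x ^ 2`
    refine (ht k).trans ?_
    push_cast
    rw [div_sub_div _ _ (by positivity) (by positivity), div_le_iff₀ (by positivity)]
    field_simp
    nlinarith [sq_nonneg ((k : ℝ) + 1 - c), sq_nonneg (c - 1)]
  calc ∑ k ∈ range n, t k
      ≤ ∑ k ∈ range n, (1 / 2 + c ^ 2 * (1 / ((k : ℝ) + 1) - 1 / ((k + 1 : ℕ) + 1))) :=
        sum_le_sum fun k _ => hterm k
    _ = n / 2 + c ^ 2 * (1 - 1 / ((n : ℝ) + 1)) := by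
        rw [sum_add_distrib, ← mul_sum, sum_range_sub' (fun k : ℕ => 1 / ((k : ℝ) + 1))]
        simp [div_eq_mul_inv]
    _ ≤ c ^ 2 + n / 2 := by
        have : 0 ≤ c ^ 2 * (1 / ((n : ℝ) + 1)) := by positivity
        linarith

section CibpLam

variable {α β : ℝ} (hα : 0 ≤ α) (hβ : 0 < β)
include hα hβ

lemma cibpLam_nonneg (n : ℕ) : 0 ≤ cibpLam α β n :=
  mul_nonneg hα (sum_nonneg fun k _ => div_nonneg hβ.le (by linarith [k.cast_nonneg (α := ℝ)]))

lemma cibpLam_le_mul (n : ℕ) : cibpLam α β n ≤ α * n := by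
  have hterm (k : ℕ) : β / ((k : ℝ) + 1 + β - 1) ≤ 1 := by
    rw [div_le_one (by linarith [k.cast_nonneg (α := ℝ)])]
    linarith [k.cast_nonneg (α := ℝ)]
  calc cibpLam α β n ≤ α * ∑ _k ∈ range n, (1 : ℝ) := by
        rw [cibpLam]; gcongr with k; exact hterm k
    _ = α * n := by simp

lemma cibpLam_le_sq_add_half {b : ℝ} (hb : β ≤ b) (hb1 : 1 ≤ b) (n : ℕ) :
    cibpLam α β n ≤ (α * b) ^ 2 + n / 2 := by
  rw [cibpLam, mul_sum]
  refine sum_range_le_sq_add_half (fun k => ?_) n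
  have hk : (0 : ℝ) ≤ k := k.cast_nonneg
  rw [show (k : ℝ) + 1 + β - 1 = k + β by ring, mul_div_assoc]
  refine mul_le_mul_of_nonneg_left ?_ hα
  rw [div_le_div_iff₀ (by linarith) (by linarith)]
  nlinarith

end CibpLam

/-- General CIBP termination: for an inhomogeneous Markov chain on `ℕ` with
Poisson transitions of means `λ(·; α^(m), β^(m))`, if the depth-varying
parameters are uniformly bounded, then `P(K^(m) = 0) → 1` as `m → ∞`. -/
theorem cibp_terminates_inhomogeneous (α β : ℕ → ℝ) (abar bbar : ℝ)
    (hαpos : ∀ m, 0 < α m) (hβpos : ∀ m, 0 < β m)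
    (hα : ∀ m, α m < abar) (hβ : ∀ m, β m < bbar)
    {Ω : Type*} [MeasurableSpace Ω] (μ : Measure Ω) [IsProbabilityMeasure μ]
    (K : ℕ → Ω → ℕ) (hmeas : ∀ m, Measurable (K m))
    (hMarkov : ∀ (m : ℕ) (k : ℕ) (hist : ℕ → ℕ),
      μ {ω | K (m + 1) ω = k ∧ ∀ i ≤ m, K i ω = hist i} =
        ENNReal.ofReal (poisProb (cibpLam (α m) (β m) (hist m)) k) *
          μ {ω | ∀ i ≤ m, K i ω = hist i}) :
    Tendsto (fun m => μ {ω | K m ω = 0}) atTop (nhds 1) := by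
  set b := max bbar 1
  have hb : 0 ≤ b := zero_le_one.trans (le_max_right _ _)
  refine tendsto_measure_eq_zero_of_poisson (r := fun m => cibpLam (α m) (β m)) (a := abar)
    (C := (abar * b) ^ 2) (fun m n => cibpLam_nonneg (hαpos m).le (hβpos m) n)
    (fun m n => ?_) (fun m n => ?_) hmeas hMarkov
  · exact (cibpLam_le_mul (hαpos m).le (hβpos m) n).trans (by gcongr; exact (hα m).le)
  · refine (cibpLam_le_sq_add_half (hαpos m).le (hβpos m) ((hβ m).le.trans (le_max_left _ _))
      (le_max_right _ _) n).trans ?_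
    gcongr
    exacts [mul_nonneg (hαpos m).le hb, (hα m).le]
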